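/- With notation as in the construction of κ (the affine permutation ∑_{i=1}^s t^{νᵢ−1}E_{i,l(i)} + ∑_{i=1}^{n−s} t⁻¹E_{i+s,m(i)}), write κ = τ_q·σ where σ ∈ S_n is the permutation with σ⁻¹(i) = l(i) for i ≤ s and σ⁻¹(i) = m(i−s) for i > s. Then the length of σ in S_n equals ∑_{k'<k} #Row(k)·#Blue(k'), i.e., the number of inversions of σ equals the number of pairs (i,j) with i ∈ Row(k), j ∈ Blue(k'), k' < k. -/

import Mathlib

/-!
Read σ⁻¹ as the word σ⁻¹(1) ⋯ σ⁻¹(n): it lists the red entries increasingly, then the blue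
entries of rows r - 1, r - 2, …, 0, each row increasingly, so it is sorted by x ↦ (block x, x).
An inversion of σ is therefore a pair of entries y < x with x in an earlier block than y. Rows
are intervals of consecutive integers and inside a row the red entries precede the blue ones, so
this happens exactly when y is blue and lies in a row above that of x; counting these pairs row
by row gives the sum.
-/

open Finset

theorem card_inversions_eq_of_strictMonoOn_toLex {ι α β : Type*} [LinearOrder ι]
    [LinearOrder α] [LinearOrder β] {s : Finset ι} {w : ι → α} {b : α → β}
    (hw : StrictMonoOn (fun i => toLex (b (w i), w i)) s) :
    #{p ∈ s ×ˢ s | p.1 < p.2 ∧ w p.2 < w p.1} =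
      #{q ∈ s.image w ×ˢ s.image w | q.2 < q.1 ∧ b q.1 < b q.2} := by
  have hinj : Set.InjOn w s := fun i hi j hj h => hw.injOn hi hj (by simp only [h])
  rw [← card_image_of_injOn (f := Prod.map w w) fun p hp q hq h => ?_]
  · congr 1
    ext ⟨x, y⟩
    simp only [mem_image, mem_filter, mem_product, Prod.exists, Prod.map, Prod.mk.injEq]
    constructor
    · rintro ⟨i, j, ⟨⟨hi, hj⟩, hij, hji⟩, rfl, rfl⟩
      have hkey := hw hi hj hij
      rw [Prod.Lex.toLex_lt_toLex] at hkey
      exact ⟨⟨⟨i, hi, rfl⟩, j, hj, rfl⟩, hji, hkey.resolve_right fun h => h.2.not_gt hji⟩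
    · rintro ⟨⟨⟨i, hi, rfl⟩, j, hj, rfl⟩, hji, hb⟩
      have hij := (hw.lt_iff_lt hi hj).1 (Prod.Lex.toLex_lt_toLex.2 (Or.inl hb))
      exact ⟨i, j, ⟨⟨hi, hj⟩, hij, hji⟩, rfl, rfl⟩
  · simp only [coe_filter, mem_product, Set.mem_ofPred_eq] at hp hq
    exact Prod.ext (hinj hp.1.1 hq.1.1 congr($h.1)) (hinj hp.1.2 hq.1.2 congr($h.2))

theorem card_filter_lt_eq_of_mem_Ioc {d : ℕ → ℕ} (hd : Monotone d) {r k x : ℕ} (hk : k < r)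
    (hx : x ∈ Ioc (d k) (d (k + 1))) : #{j : Fin r | d (j + 1) < x} = k := by
  rw [mem_Ioc] at hx
  have hfilter : univ.filter (fun j : Fin r => d (j + 1) < x) =
      univ.filter (fun j : Fin r => (j : ℕ) < k) := by
    ext j
    simp only [mem_filter, mem_univ, true_and]
    constructor
    · intro hj
      by_contra! hkj
      exact (hx.2.trans (hd (Nat.succ_le_succ hkj))).not_gt hj
    · intro hj
      exact (hd hj).trans_lt hx.1
  rw [hfilter, Fin.card_filter_val_lt, min_eq_right hk.le]

section Blocks

variable (r : ℕ) (rowOf : ℕ → ℕ) (Red : ℕ → Finset ℕ)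

/-- The segment of the word σ⁻¹ containing `x`: 0 for red entries, `r - k` for the blue entries
of row `k`. -/
def block (x : ℕ) : ℕ := if x ∈ Red (rowOf x) then 0 else r - rowOf x

variable {r rowOf Red}

theorem block_of_mem {x : ℕ} (hx : x ∈ Red (rowOf x)) : block r rowOf Red x = 0 := if_pos hx

theorem block_of_notMem {x : ℕ} (hx : x ∉ Red (rowOf x)) : block r rowOf Red x = r - rowOf x :=
  if_neg hx

theorem mem_rowOf_of_mem_biUnion {S Row : ℕ → Finset ℕ} (hS : ∀ k, S k ⊆ Row k)
    (hrow : ∀ k < r, ∀ x ∈ Row k, rowOf x = k) {x : ℕ} (hx : x ∈ (range r).biUnion S) :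
    x ∈ S (rowOf x) ∧ rowOf x < r := by
  obtain ⟨k, hk, hxk⟩ := mem_biUnion.1 hx
  rw [mem_range] at hk
  rw [hrow k hk x (hS k hxk)]
  exact ⟨hxk, hk⟩

theorem rowOf_lt_rowOf_of_block_lt {Row : ℕ → Finset ℕ}
    (hrow : ∀ k < r, ∀ x ∈ Row k, rowOf x = k)
    (hmono : Monotone rowOf) (hred_lt : ∀ k, ∀ x ∈ Red k, ∀ y ∈ Row k, y ∉ Red k → x < y)
    {x y : ℕ} (hy : y ∈ (range r).biUnion Row) (hyx : y < x)
    (hb : block r rowOf Red x < block r rowOf Red y) : rowOf y < rowOf x := by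
  refine (hmono hyx.le).lt_of_ne fun hxy => ?_
  have hyRed : y ∉ Red (rowOf y) := fun h => by
    rw [block_of_mem h] at hb
    exact Nat.not_lt_zero _ hb
  have hxRed : x ∈ Red (rowOf x) := by
    by_contra h
    rw [block_of_notMem h, block_of_notMem hyRed, hxy] at hb
    exact lt_irrefl _ hb
  exact hyx.not_gt (hred_lt _ x (hxy ▸ hxRed) y
    (mem_rowOf_of_mem_biUnion (fun _ => subset_rfl) hrow hy).1 hyRed)

theorem block_lt_block_iff {Row : ℕ → Finset ℕ}
    (hrow : ∀ k < r, ∀ x ∈ Row k, rowOf x = k)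
    (hmono : Monotone rowOf) {k k' x y : ℕ} (hk : k < r) (hk'k : k' < k) (hx : x ∈ Row k)
    (hy : y ∈ Row k') : y < x ∧ block r rowOf Red x < block r rowOf Red y ↔ y ∉ Red k' := by
  have hxk := hrow k hk x hx
  have hyk := hrow k' (hk'k.trans hk) y hy
  constructor
  · rintro ⟨-, hb⟩ h
    rw [block_of_mem (x := y) (by rwa [hyk])] at hb
    exact Nat.not_lt_zero _ hb
  · intro hyRed
    refine ⟨lt_of_not_ge fun hxy => (hmono hxy).not_gt (by rwa [hxk, hyk]), ?_⟩
    rw [block_of_notMem (x := y) (by rwa [hyk]), hyk]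
    unfold block
    split_ifs <;> omega

theorem card_filter_block_lt {Row Blue : ℕ → Finset ℕ}
    (hrow : ∀ k < r, ∀ x ∈ Row k, rowOf x = k)
    (hmono : Monotone rowOf) (hred_lt : ∀ k, ∀ x ∈ Red k, ∀ y ∈ Row k, y ∉ Red k → x < y)
    (hBlue : ∀ k, Blue k = Row k \ Red k) :
    #{q ∈ (range r).biUnion Row ×ˢ (range r).biUnion Row |
        q.2 < q.1 ∧ block r rowOf Red q.1 < block r rowOf Red q.2} =
      ∑ p ∈ (range r ×ˢ range r).filter (fun p => p.2 < p.1), #(Row p.1) * #(Blue p.2) := by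
  have hmem : ∀ x ∈ (range r).biUnion Row, x ∈ Row (rowOf x) ∧ rowOf x < r :=
    fun x => mem_rowOf_of_mem_biUnion (fun _ => subset_rfl) hrow
  rw [card_eq_sum_card_fiberwise (f := fun q => (rowOf q.1, rowOf q.2))
    (t := (range r ×ˢ range r).filter (fun p => p.2 < p.1)) fun q hq => ?_]
  · refine sum_congr rfl fun ⟨k, k'⟩ hkk => ?_
    simp only [mem_filter, mem_product, mem_range] at hkk
    rw [← card_product, hBlue]
    congr 1
    ext ⟨x, y⟩
    simp only [mem_filter, mem_product, Prod.mk.injEq, mem_sdiff]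
    constructor
    · rintro ⟨⟨⟨hx, hy⟩, hb⟩, rfl, rfl⟩
      have hx' := (hmem x hx).1
      have hy' := (hmem y hy).1
      exact ⟨hx', hy', (block_lt_block_iff hrow hmono hkk.1.1 hkk.2 hx' hy').1 hb⟩
    · rintro ⟨hx, hy, hyRed⟩
      have hxU := mem_biUnion.2 ⟨k, mem_range.2 hkk.1.1, hx⟩
      have hyU := mem_biUnion.2 ⟨k', mem_range.2 hkk.1.2, hy⟩
      exact ⟨⟨⟨hxU, hyU⟩, (block_lt_block_iff hrow hmono hkk.1.1 hkk.2 hx hy).2 hyRed⟩,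
        hrow k hkk.1.1 x hx, hrow k' hkk.1.2 y hy⟩
  · rw [mem_coe, mem_filter, mem_product] at hq
    rw [mem_coe, mem_filter, mem_product, mem_range, mem_range]
    obtain ⟨⟨hx, hy⟩, hyx, hb⟩ := hq
    exact ⟨⟨(hmem _ hx).2, (hmem _ hy).2⟩,
      rowOf_lt_rowOf_of_block_lt hrow hmono hred_lt hy hyx hb⟩

theorem strictMonoOn_toLex_block {n s : ℕ} {σinv l m : ℕ → ℕ}
    (hσinv : ∀ i, σinv i = if i ≤ s then l i else m (i - s))
    (hlmono : ∀ i j, 1 ≤ i → i < j → j ≤ s → l i < l j)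
    (hl : ∀ i ∈ Icc 1 s, l i ∈ Red (rowOf (l i)))
    (hm : ∀ i ∈ Icc 1 (n - s), m i ∉ Red (rowOf (m i)) ∧ rowOf (m i) < r)
    (hmorder : ∀ i ∈ Icc 1 (n - s), ∀ j ∈ Icc 1 (n - s), i < j →
      rowOf (m j) < rowOf (m i) ∨ (rowOf (m i) = rowOf (m j) ∧ m i < m j)) :
    StrictMonoOn (fun i => toLex (block r rowOf Red (σinv i), σinv i)) (Icc 1 n) := by
  intro i hi j hj hij
  simp only [coe_Icc, Set.mem_Icc] at hi hj
  simp only [hσinv, Prod.Lex.toLex_lt_toLex]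
  by_cases hjs : j ≤ s
  · rw [if_pos (hij.le.trans hjs), if_pos hjs,
      block_of_mem (hl i (mem_Icc.2 ⟨hi.1, by omega⟩)), block_of_mem (hl j (mem_Icc.2 ⟨hj.1, hjs⟩))]
    exact Or.inr ⟨rfl, hlmono i j hi.1 hij hjs⟩
  obtain ⟨hjRed, hjr⟩ := hm (j - s) (mem_Icc.2 ⟨by omega, by omega⟩)
  rw [if_neg hjs, block_of_notMem hjRed]
  by_cases his : i ≤ s
  · rw [if_pos his, block_of_mem (hl i (mem_Icc.2 ⟨hi.1, his⟩))]
    exact Or.inl (by omega)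
  obtain ⟨hiRed, hir⟩ := hm (i - s) (mem_Icc.2 ⟨by omega, by omega⟩)
  rw [if_neg his, block_of_notMem hiRed]
  rcases hmorder (i - s) (mem_Icc.2 ⟨by omega, by omega⟩) (j - s) (mem_Icc.2 ⟨by omega, by omega⟩)
    (by omega) with hrow_lt | ⟨hrow_eq, hlt⟩
  · exact Or.inl (by omega)
  · exact Or.inr ⟨by rw [hrow_eq], hlt⟩

end Blocks

theorem image_Icc_eq_union_of_piecewise {α : Type*} [DecidableEq α] {n s : ℕ} (hsn : s ≤ n)
    {w l m : ℕ → α} (hw : ∀ i, w i = if i ≤ s then l i else m (i - s)) :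
    (Icc 1 n).image w = (Icc 1 s).image l ∪ (Icc 1 (n - s)).image m := by
  have hsplit : Icc 1 n = Icc 1 s ∪ (Icc 1 (n - s)).image (· + s) := by
    ext i
    simp only [mem_union, mem_Icc, mem_image]
    constructor
    · intro hi
      by_cases his : i ≤ s
      · exact Or.inl ⟨hi.1, his⟩
      · exact Or.inr ⟨i - s, ⟨by omega, by omega⟩, by omega⟩
    · rintro (hi | ⟨j, hj, rfl⟩) <;> omega
  rw [hsplit, image_union, image_image]
  congr 1 <;> refine image_congr fun i hi => ?_ <;> simp only [coe_Icc, Set.mem_Icc] at hi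
  · simp only [hw, if_pos hi.2]
  · simp only [Function.comp, hw, if_neg (show ¬ i + s ≤ s by omega), Nat.add_sub_cancel]

theorem length_of_sigma_general (n r : ℕ) (lam : Fin r → ℕ)
    (hsum : ∑ i, lam i = n)
    (d : ℕ → ℕ)
    (hd : ∀ k : ℕ, d k = ∑ j ∈ Finset.univ.filter (fun j : Fin r => (j : ℕ) < k), lam j)
    (Row : ℕ → Finset ℕ) (hRow : ∀ k, Row k = Finset.Ioc (d k) (d (k + 1)))
    (maxprev : ℕ → ℕ)
    (Red : ℕ → Finset ℕ) (hRed : ∀ k, Red k = Finset.Ioc (d k) (d (k + 1) - maxprev k))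
    (Blue : ℕ → Finset ℕ) (hBlue : ∀ k, Blue k = Row k \ Red k)
    (s : ℕ) (hs : s = Finset.univ.sup lam)
    (rowOf : ℕ → ℕ)
    (hrowOf : ∀ x : ℕ, rowOf x = (Finset.univ.filter (fun k : Fin r => d ((k : ℕ) + 1) < x)).card)
    (l : ℕ → ℕ)
    (hlmono : ∀ i j : ℕ, 1 ≤ i → i < j → j ≤ s → l i < l j)
    (hlrange : (Finset.Icc 1 s).image l = (Finset.range r).biUnion Red)
    (m : ℕ → ℕ)
    (hmrange : (Finset.Icc 1 (n - s)).image m = (Finset.range r).biUnion Blue)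
    (hmorder : ∀ i ∈ Finset.Icc 1 (n - s), ∀ j ∈ Finset.Icc 1 (n - s),
      (i < j ↔ (rowOf (m j) < rowOf (m i) ∨ (rowOf (m i) = rowOf (m j) ∧ m i < m j))))
    (σinv : ℕ → ℕ) (hσinv : ∀ i : ℕ, σinv i = if i ≤ s then l i else m (i - s)) :
    (((Finset.Icc 1 n) ×ˢ (Finset.Icc 1 n)).filter
        (fun p : ℕ × ℕ => p.1 < p.2 ∧ σinv p.2 < σinv p.1)).card
      = ∑ p ∈ (Finset.range r ×ˢ Finset.range r).filter (fun p => p.2 < p.1),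
          (Row p.1).card * (Blue p.2).card := by
  have hdmono : Monotone d := fun a b hab => by
    simp only [hd]
    exact sum_le_sum_of_subset (monotone_filter_right _ fun j _ hj => hj.trans_le hab)
  have hsn : s ≤ n :=
    hs ▸ hsum ▸ Finset.sup_le fun i _ => single_le_sum (fun _ _ => Nat.zero_le _) (mem_univ i)
  have hrow : ∀ k < r, ∀ x ∈ Row k, rowOf x = k := fun k hk x hx =>
    (hrowOf x).trans (card_filter_lt_eq_of_mem_Ioc hdmono hk (hRow k ▸ hx))
  have hmono : Monotone rowOf := fun x y hxy => by
    simp only [hrowOf]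
    exact card_le_card (monotone_filter_right _ fun j _ hj => hj.trans_le hxy)
  have hRedRow : ∀ k, Red k ⊆ Row k := fun k => by
    rw [hRed, hRow]
    exact Ioc_subset_Ioc_right (Nat.sub_le _ _)
  have hred_lt : ∀ k, ∀ x ∈ Red k, ∀ y ∈ Row k, y ∉ Red k → x < y := by
    intro k x hx y hy hyRed
    simp only [hRow, hRed, mem_Ioc] at hx hy hyRed
    omega
  have hl : ∀ i ∈ Icc 1 s, l i ∈ Red (rowOf (l i)) := fun i hi =>
    (mem_rowOf_of_mem_biUnion hRedRow hrow (hlrange ▸ mem_image_of_mem l hi)).1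
  have hm : ∀ i ∈ Icc 1 (n - s), m i ∉ Red (rowOf (m i)) ∧ rowOf (m i) < r := fun i hi => by
    obtain ⟨hblue, hr⟩ := mem_rowOf_of_mem_biUnion (fun k => hBlue k ▸ sdiff_subset) hrow
      (hmrange ▸ mem_image_of_mem m hi)
    exact ⟨(mem_sdiff.1 (hBlue _ ▸ hblue)).2, hr⟩
  have himage : (Icc 1 n).image σinv = (range r).biUnion Row := by
    rw [image_Icc_eq_union_of_piecewise hsn hσinv, hlrange, hmrange, ← biUnion_union]
    exact biUnion_congr rfl fun k _ => hBlue k ▸ union_sdiff_of_subset (hRedRow k)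
  rw [card_inversions_eq_of_strictMonoOn_toLex (strictMonoOn_toLex_block hσinv hlmono hl hm
    fun i hi j hj => (hmorder i hi j hj).1), himage]
  exact card_filter_block_lt hrow hmono hred_lt hBlue

/-- write κ = τ_q·σ, where σ ∈ S_n is the permutation with
σ⁻¹(i) = l(i) for i ≤ s and σ⁻¹(i) = m(i−s) for i > s.  Then the inversion number of
σ equals ∑_{k'<k} #Row(k)·#Blue(k').  Setup (Row, Red, Blue, l, m, s) as in the paper. -/
theorem length_of_sigma (n r : ℕ) (hr : 0 < r) (lam : Fin r → ℕ)
    (hpos : ∀ i, 0 < lam i) (hsum : ∑ i, lam i = n)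
    (d : ℕ → ℕ)
    (hd : ∀ k : ℕ, d k = ∑ j ∈ Finset.univ.filter (fun j : Fin r => (j : ℕ) < k), lam j)
    (Row : ℕ → Finset ℕ) (hRow : ∀ k, Row k = Finset.Ioc (d k) (d (k + 1)))
    (maxprev : ℕ → ℕ)
    (hmp : ∀ k : ℕ, maxprev k = (Finset.univ.filter (fun j : Fin r => (j : ℕ) < k)).sup lam)
    (Red : ℕ → Finset ℕ) (hRed : ∀ k, Red k = Finset.Ioc (d k) (d (k + 1) - maxprev k))
    (Blue : ℕ → Finset ℕ) (hBlue : ∀ k, Blue k = Row k \ Red k)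
    (s : ℕ) (hs : s = Finset.univ.sup lam)
    (rowOf : ℕ → ℕ)
    (hrowOf : ∀ x : ℕ, rowOf x = (Finset.univ.filter (fun k : Fin r => d ((k : ℕ) + 1) < x)).card)
    (l : ℕ → ℕ)
    (hlmono : ∀ i j : ℕ, 1 ≤ i → i < j → j ≤ s → l i < l j)
    (hlrange : (Finset.Icc 1 s).image l = (Finset.range r).biUnion Red)
    (m : ℕ → ℕ)
    (hminj : ∀ i ∈ Finset.Icc 1 (n - s), ∀ j ∈ Finset.Icc 1 (n - s), m i = m j → i = j)
    (hmrange : (Finset.Icc 1 (n - s)).image m = (Finset.range r).biUnion Blue)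
    (hmorder : ∀ i ∈ Finset.Icc 1 (n - s), ∀ j ∈ Finset.Icc 1 (n - s),
      (i < j ↔ (rowOf (m j) < rowOf (m i) ∨ (rowOf (m i) = rowOf (m j) ∧ m i < m j))))
    (σinv : ℕ → ℕ) (hσinv : ∀ i : ℕ, σinv i = if i ≤ s then l i else m (i - s)) :
    (((Finset.Icc 1 n) ×ˢ (Finset.Icc 1 n)).filter
        (fun p : ℕ × ℕ => p.1 < p.2 ∧ σinv p.2 < σinv p.1)).card
      = ∑ p ∈ (Finset.range r ×ˢ Finset.range r).filter (fun p => p.2 < p.1),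
          (Row p.1).card * (Blue p.2).card :=
  length_of_sigma_general n r lam hsum d hd Row hRow maxprev Red hRed Blue hBlue s hs rowOf hrowOf l
    hlmono hlrange m hmrange hmorder σinv hσinv
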